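/- Let A be a Banach algebra and B a Banach A-bimodule. Then Z^ℓ_{B**}(A**) = A** (i.e., for every a″ ∈ A** the map b″ ↦ π_ℓ***(a″, b″) is weak*–weak* continuous on B**) if and only if for every b₀′ ∈ B*, the map T_{b₀′} : B** → A*, T_{b₀′}(b″) = π_ℓ**(b″, b₀′), is continuous from B** with its weak* topology to A* with its weak topology. -/

import Mathlib

/-!
By construction `⟨m***(x″, y″), z′⟩ = ⟨x″, m**(y″, z′)⟩`. A map into a weak* topology, or into a
weak topology, is continuous iff it stays continuous after pairing with every element of the
predual, respectively of the dual. So both conditions say that `y″ ↦ ⟨x″, m**(y″, z′)⟩` is weak*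
continuous for all `x″` and `z′`; they only quantify over `x″` and `z′` in opposite orders.
-/

namespace NormedSpace

def Dual (𝕜 : Type*) [NontriviallyNormedField 𝕜] (E : Type*) [SeminormedAddCommGroup E]
    [NormedSpace 𝕜 E] : Type _ :=
  E →L[𝕜] 𝕜

noncomputable instance Dual.instNormedAddCommGroup (𝕜 : Type*) [NontriviallyNormedField 𝕜]
    (E : Type*) [NormedAddCommGroup E] [NormedSpace 𝕜 E] :
    NormedAddCommGroup (Dual 𝕜 E) :=
  ContinuousLinearMap.toNormedAddCommGroup

noncomputable instance Dual.instNormedSpace (𝕜 : Type*) [NontriviallyNormedField 𝕜]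
    (E : Type*) [NormedAddCommGroup E] [NormedSpace 𝕜 E] :
    NormedSpace 𝕜 (Dual 𝕜 E) :=
  ContinuousLinearMap.toNormedSpace

end NormedSpace

open NormedSpace ContinuousLinearMap Filter Topology

section ArensDefs

variable (𝕜 : Type*) [RCLike 𝕜]
variable {X Y Z : Type*}
  [NormedAddCommGroup X] [NormedSpace 𝕜 X]
  [NormedAddCommGroup Y] [NormedSpace 𝕜 Y]
  [NormedAddCommGroup Z] [NormedSpace 𝕜 Z]

/-- The first adjoint `m*` of a bounded bilinear map `m : X × Y → Z`, characterized by
`⟨m*(z′,x), y⟩ = ⟨z′, m(x,y)⟩`. -/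
noncomputable def arensS (m : X →L[𝕜] Y →L[𝕜] Z) :
    Dual 𝕜 Z →L[𝕜] X →L[𝕜] Dual 𝕜 Y :=
  ((compL 𝕜 X (Y →L[𝕜] Z) (Dual 𝕜 Y)).flip m).comp (compL 𝕜 Y Z 𝕜)

/-- The second adjoint `m**`, characterized by `⟨m**(y″,z′), x⟩ = ⟨y″, m*(z′,x)⟩`. -/
noncomputable def arensSS (m : X →L[𝕜] Y →L[𝕜] Z) :
    Dual 𝕜 (Dual 𝕜 Y) →L[𝕜] Dual 𝕜 Z →L[𝕜] Dual 𝕜 X :=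
  ((compL 𝕜 (Dual 𝕜 Z) (X →L[𝕜] Dual 𝕜 Y) (Dual 𝕜 X)).flip (arensS 𝕜 m)).comp
    (compL 𝕜 X (Dual 𝕜 Y) 𝕜)

/-- The Arens (triple adjoint) extension `m***` of a bounded bilinear map, characterized by
`⟨m***(x″,y″), z′⟩ = ⟨x″, m**(y″,z′)⟩`. -/
noncomputable def arensExt (m : X →L[𝕜] Y →L[𝕜] Z) :
    Dual 𝕜 (Dual 𝕜 X) →L[𝕜] Dual 𝕜 (Dual 𝕜 Y) →L[𝕜] Dual 𝕜 (Dual 𝕜 Z) :=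
  ((compL 𝕜 (Dual 𝕜 (Dual 𝕜 Y)) (Dual 𝕜 Z →L[𝕜] Dual 𝕜 X) (Dual 𝕜 (Dual 𝕜 Z))).flip
      (arensSS 𝕜 m)).comp
    (compL 𝕜 (Dual 𝕜 Z) (Dual 𝕜 X) 𝕜)

end ArensDefs

def IsWeakStarWeakStarContinuous (𝕜 : Type*) [RCLike 𝕜] {E F : Type*}
    [NormedAddCommGroup E] [NormedSpace 𝕜 E]
    [NormedAddCommGroup F] [NormedSpace 𝕜 F]
    (T : Dual 𝕜 E → Dual 𝕜 F) : Prop :=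
  Continuous fun x : WeakDual 𝕜 E =>
    (StrongDual.toWeakDual (T (WeakDual.toStrongDual x)) : WeakDual 𝕜 F)

noncomputable instance NormedSpace.Dual.instFunLike (𝕜 : Type*) [NontriviallyNormedField 𝕜]
    (E : Type*) [SeminormedAddCommGroup E] [NormedSpace 𝕜 E] : FunLike (Dual 𝕜 E) E 𝕜 :=
  ContinuousLinearMap.funLike

theorem WeakBilin.continuous_iff_forall_continuous_eval {α 𝕜 E F : Type*} [TopologicalSpace 𝕜]
    [CommSemiring 𝕜] [AddCommMonoid E] [Module 𝕜 E] [AddCommMonoid F] [Module 𝕜 F]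
    {B : E →ₗ[𝕜] F →ₗ[𝕜] 𝕜} [TopologicalSpace α] {g : α → WeakBilin B} :
    Continuous g ↔ ∀ y, Continuous fun a => B (g a) y :=
  ⟨fun hg y => (WeakBilin.eval_continuous B y).comp hg, WeakBilin.continuous_of_continuous_eval B⟩

section

variable {𝕜 : Type*} [RCLike 𝕜] {X Y Z : Type*}
  [NormedAddCommGroup X] [NormedSpace 𝕜 X]
  [NormedAddCommGroup Y] [NormedSpace 𝕜 Y]
  [NormedAddCommGroup Z] [NormedSpace 𝕜 Z]

theorem isWeakStarWeakStarContinuous_iff {T : Dual 𝕜 Y → Dual 𝕜 Z} :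
    IsWeakStarWeakStarContinuous 𝕜 T ↔
      ∀ z : Z, Continuous fun y : WeakDual 𝕜 Y => T (WeakDual.toStrongDual y) z :=
  WeakBilin.continuous_iff_forall_continuous_eval

theorem continuous_toWeakSpace_iff {α : Type*} [TopologicalSpace α] {f : α → X} :
    Continuous (fun a => toWeakSpace 𝕜 X (f a)) ↔ ∀ φ : Dual 𝕜 X, Continuous fun a => φ (f a) :=
  WeakBilin.continuous_iff_forall_continuous_eval

theorem forall_isWeakStarWeakStarContinuous_arensExt_iff (m : X →L[𝕜] Y →L[𝕜] Z) :
    (∀ x'' : Dual 𝕜 (Dual 𝕜 X),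
        IsWeakStarWeakStarContinuous 𝕜 (fun y'' : Dual 𝕜 (Dual 𝕜 Y) => arensExt 𝕜 m x'' y'')) ↔
      ∀ z' : Dual 𝕜 Z, Continuous fun y'' : WeakDual 𝕜 (Dual 𝕜 Y) =>
        toWeakSpace 𝕜 (Dual 𝕜 X) (arensSS 𝕜 m (WeakDual.toStrongDual y'') z') := by
  calc (∀ x'', IsWeakStarWeakStarContinuous 𝕜 fun y'' => arensExt 𝕜 m x'' y'')
      ↔ ∀ x'' z', Continuous fun y'' : WeakDual 𝕜 (Dual 𝕜 Y) =>
          x'' (arensSS 𝕜 m (WeakDual.toStrongDual y'') z') :=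
        forall_congr' fun _ => isWeakStarWeakStarContinuous_iff
    _ ↔ _ := forall_comm.trans (forall_congr' fun _ => continuous_toWeakSpace_iff.symm)

end

theorem leftTopologicalCenter_eq_top_iff_secondAdjoints_weakStarToWeak_continuous_general
    {𝕜 : Type*} [RCLike 𝕜]
    {A : Type*} [NonUnitalNormedRing A] [NormedSpace 𝕜 A]
    {B : Type*} [NormedAddCommGroup B] [NormedSpace 𝕜 B]
    (πℓ : A →L[𝕜] B →L[𝕜] B) :
    (∀ a'' : Dual 𝕜 (Dual 𝕜 A),
        IsWeakStarWeakStarContinuous 𝕜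
          (fun b'' : Dual 𝕜 (Dual 𝕜 B) => arensExt 𝕜 πℓ a'' b'')) ↔
      ∀ b₀' : Dual 𝕜 B,
        Continuous fun b'' : WeakDual 𝕜 (Dual 𝕜 B) =>
          (toWeakSpace 𝕜 (Dual 𝕜 A) (arensSS 𝕜 πℓ (WeakDual.toStrongDual b'') b₀') :
            WeakSpace 𝕜 (Dual 𝕜 A)) :=
  forall_isWeakStarWeakStarContinuous_arensExt_iff πℓ

/-- `Z^ℓ_{B**}(A**) = A**` (every `b″ ↦ π_ℓ***(a″, b″)` is weak*–weak*
continuous) iff for every `b₀′ ∈ B*` the map `T_{b₀′} : B** → A*`, `T_{b₀′}(b″) = π_ℓ**(b″, b₀′)`,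
is weak*-to-weak continuous. -/
theorem leftTopologicalCenter_eq_top_iff_secondAdjoints_weakStarToWeak_continuous
    {𝕜 : Type*} [RCLike 𝕜]
    {A : Type*} [NonUnitalNormedRing A] [NormedSpace 𝕜 A]
    [IsScalarTower 𝕜 A A] [SMulCommClass 𝕜 A A] [CompleteSpace A]
    {B : Type*} [NormedAddCommGroup B] [NormedSpace 𝕜 B] [CompleteSpace B]
    (πℓ : A →L[𝕜] B →L[𝕜] B) (πr : B →L[𝕜] A →L[𝕜] B)
    (hℓ : ∀ (a₁ a₂ : A) (b : B), πℓ (a₁ * a₂) b = πℓ a₁ (πℓ a₂ b))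
    (hr : ∀ (b : B) (a₁ a₂ : A), πr b (a₁ * a₂) = πr (πr b a₁) a₂)
    (hℓr : ∀ (a₁ : A) (b : B) (a₂ : A), πr (πℓ a₁ b) a₂ = πℓ a₁ (πr b a₂)) :
    (∀ a'' : Dual 𝕜 (Dual 𝕜 A),
        IsWeakStarWeakStarContinuous 𝕜
          (fun b'' : Dual 𝕜 (Dual 𝕜 B) => arensExt 𝕜 πℓ a'' b'')) ↔
      ∀ b₀' : Dual 𝕜 B,
        Continuous fun b'' : WeakDual 𝕜 (Dual 𝕜 B) =>
          (toWeakSpace 𝕜 (Dual 𝕜 A) (arensSS 𝕜 πℓ (WeakDual.toStrongDual b'') b₀') :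
            WeakSpace 𝕜 (Dual 𝕜 A)) :=
  leftTopologicalCenter_eq_top_iff_secondAdjoints_weakStarToWeak_continuous_general πℓ
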